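/- arXiv:2509.08683 — 5 statements merged into one kernel-verified Lean document; each statement's English description precedes it below -/
import Mathlib

section
/- Let K, m be natural numbers, L a real number, θ : Fin K → Fin m → ℝ a family of local model vectors, and z : Fin K → Fin K → Fin m → AddCircle (1 : ℝ) a family of mask vectors. Define the encrypted update of client k coordinatewise by p k i = π(θ k i / L) + ∑_{j, k < j} z k j i − ∑_{j, j < k} z j k i, where π : ℝ → AddCircle (1 : ℝ) is the canonical quotient map. Then for every coordinate i, ∑_{k ∈ Fin K} p k i = ∑_{k ∈ Fin K} π(θ k i / L); that is, the server's aggregate of the encrypted updates equals the image on the torus of the scaled aggregate of the local models. -/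
open Finset

/-! Each mask `z k j` with `k < j` is added once, by client `k`, and subtracted once, by client
`j`, so the masks cancel in the aggregate. -/

theorem sum_sum_filter_gt_eq_sum_sum_filter_lt {ι M : Type*} [Fintype ι] [LinearOrder ι]
    [AddCommMonoid M] (f : ι → ι → M) :
    ∑ k, ∑ j ∈ univ.filter (fun j => k < j), f k j =
      ∑ k, ∑ j ∈ univ.filter (fun j => j < k), f j k :=
  sum_comm' fun _ _ => by simp

theorem sum_add_sum_filter_gt_sub_sum_filter_lt {ι M : Type*} [Fintype ι] [LinearOrder ι]
    [AddCommGroup M] (a : ι → M) (z : ι → ι → M) :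
    ∑ k, (a k + ∑ j ∈ univ.filter (fun j => k < j), z k j
        - ∑ j ∈ univ.filter (fun j => j < k), z j k) = ∑ k, a k := by
  rw [sum_sub_distrib, sum_add_distrib, sum_sum_filter_gt_eq_sum_sum_filter_lt,
    add_sub_cancel_right]

/-- Correctness of torus-based secure aggregation: if each client `k` sends the
encrypted update `p k i = (θ k i / L : ℝ) + ∑_{j > k} z k j i - ∑_{j < k} z j k i`
on the torus `AddCircle (1 : ℝ)`, then the server's aggregate of the encrypted
updates equals the image on the torus of the scaled aggregate of local models. -/
theorem torus_secure_aggregation_correct (K m : ℕ) (L : ℝ)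
    (θ : Fin K → Fin m → ℝ)
    (z : Fin K → Fin K → Fin m → AddCircle (1 : ℝ))
    (p : Fin K → Fin m → AddCircle (1 : ℝ))
    (hp : ∀ k i, p k i =
      ((θ k i / L : ℝ) : AddCircle (1 : ℝ))
        + (∑ j ∈ Finset.univ.filter (fun j => k < j), z k j i)
        - ∑ j ∈ Finset.univ.filter (fun j => j < k), z j k i)
    (i : Fin m) :
    ∑ k : Fin K, p k i = ∑ k : Fin K, ((θ k i / L : ℝ) : AddCircle (1 : ℝ)) := by
  simp only [hp]
  exact sum_add_sum_filter_gt_sub_sum_filter_lt _ fun k j => z k j i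
end

section
/- Let (Ω, ℙ) be a probability space and X, Z : Ω → AddCircle (1 : ℝ) be measurable random variables such that the law of Z is the Haar probability measure on AddCircle (1 : ℝ) and X and Z are independent. Then X and X + Z are independent random variables. -/
open MeasureTheory ProbabilityTheory

/-- One-time pad on the torus, perfect secrecy: if `Z` is uniformly (Haar) distributed
on the torus `AddCircle (1 : ℝ)` and independent of `X`, then the plaintext `X` and the
ciphertext `X + Z` are independent. -/
theorem torus_otp_perfect_secrecy {Ω : Type*} [MeasureSpace Ω]
    [IsProbabilityMeasure (ℙ : Measure Ω)]
    (X Z : Ω → AddCircle (1 : ℝ)) (hX : Measurable X) (hZ : Measurable Z)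
    (hZ_unif : (ℙ : Measure Ω).map Z = (volume : Measure (AddCircle (1 : ℝ))))
    (hXZ : IndepFun X Z ℙ) :
    IndepFun X (X + Z) ℙ := by
  have hXm : AEMeasurable X ℙ := hX.aemeasurable
  have hZm : AEMeasurable Z ℙ := hZ.aemeasurable
  have hjoint : (ℙ : Measure Ω).map (fun ω => (X ω, Z ω)) =
      ((ℙ : Measure Ω).map X).prod volume := by
    rw [← hZ_unif]
    exact (indepFun_iff_map_prod_eq_prod_map_map hXm hZm).mp hXZ
  haveI : IsProbabilityMeasure ((ℙ : Measure Ω).map X) :=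
    Measure.isProbabilityMeasure_map hXm
  have hMP : MeasurePreserving (fun p : AddCircle (1 : ℝ) × AddCircle (1 : ℝ) =>
      (p.1, p.1 + p.2)) (((ℙ : Measure Ω).map X).prod volume)
      (((ℙ : Measure Ω).map X).prod volume) :=
    (MeasurePreserving.id _).skew_product measurable_add
      (Filter.Eventually.of_forall fun x => map_add_left_eq_self volume x)
  have hmap2 : (ℙ : Measure Ω).map (fun ω => (X ω, X ω + Z ω)) =
      ((ℙ : Measure Ω).map X).prod volume := by
    have : (fun ω => (X ω, X ω + Z ω)) =
        (fun p : AddCircle (1 : ℝ) × AddCircle (1 : ℝ) => (p.1, p.1 + p.2)) ∘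
          (fun ω => (X ω, Z ω)) := rfl
    rw [this, ← Measure.map_map (measurable_fst.prodMk measurable_add) (hX.prodMk hZ),
      hjoint, hMP.map_eq]
  have hsum : (ℙ : Measure Ω).map (X + Z) = volume := by
    have : (X + Z) = Prod.snd ∘ (fun ω => (X ω, X ω + Z ω)) := rfl
    rw [this, ← Measure.map_map measurable_snd (hX.prodMk (hX.add hZ) : Measurable fun ω => (X ω, X ω + Z ω)), hmap2]
    exact Measure.map_snd_prod.trans (by simp)
  refine (indepFun_iff_map_prod_eq_prod_map_map hXm (hX.add hZ).aemeasurable).mpr ?_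
  rw [hsum]; exact hmap2
end

section
/- Let (Ω, ℙ) be a probability space, E a measurable space, X : Ω → AddCircle (1 : ℝ), Y : Ω → E, and Z : Ω → AddCircle (1 : ℝ) measurable random variables. Assume the law of Z is the Haar probability measure on AddCircle (1 : ℝ) and Z is independent of the pair ω ↦ (X ω, Y ω). Then X + Z is independent of the pair ω ↦ (X ω, Y ω), and the law of X + Z is the Haar probability measure. -/
open MeasureTheory ProbabilityTheory

/-! Conditionally on `W = (X, Y)`, the shift `z ↦ X + z` preserves the Haar measure, so the joint
law of `(W, X + Z)` equals that of `(W, Z)`, namely the product of the law of `W` with Haar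
measure. This product form is exactly independence of `X + Z` from `W`, and its second marginal
is Haar measure. -/

section OneTimePad

variable {Ω α G : Type*} {mΩ : MeasurableSpace Ω} {P : Measure Ω} [IsProbabilityMeasure P]
  [MeasurableSpace α] [Add G] [MeasurableSpace G] [MeasurableAdd₂ G]
  {μ : Measure G} [μ.IsAddLeftInvariant]

theorem measurePreserving_prod_add_left_of_measurable {ν : Measure α} [SFinite ν] [SFinite μ]
    {f : α → G} (hf : Measurable f) :
    MeasurePreserving (fun p : α × G => (p.1, f p.1 + p.2)) (ν.prod μ) (ν.prod μ) :=
  (MeasurePreserving.id ν).skew_product ((hf.comp measurable_fst).add measurable_snd)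
    (.of_forall fun a => map_add_left_eq_self μ (f a))

variable {W : Ω → α} {Z : Ω → G} {f : α → G}

theorem map_prod_add_eq_prod_of_indepFun (hW : Measurable W) (hZ : Measurable Z)
    (hf : Measurable f) (hZ_law : P.map Z = μ) (hWZ : IndepFun W Z P) :
    P.map (fun ω => (W ω, f (W ω) + Z ω)) = (P.map W).prod μ := by
  have : IsProbabilityMeasure μ := hZ_law ▸ Measure.isProbabilityMeasure_map hZ.aemeasurable
  have hjoint : P.map (fun ω => (W ω, Z ω)) = (P.map W).prod μ := by
    rw [← hZ_law]
    exact (indepFun_iff_map_prod_eq_prod_map_map hW.aemeasurable hZ.aemeasurable).mp hWZ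
  have hshear := measurePreserving_prod_add_left_of_measurable (ν := P.map W) (μ := μ) hf
  calc P.map (fun ω => (W ω, f (W ω) + Z ω))
      = (P.map (fun ω => (W ω, Z ω))).map (fun p : α × G => (p.1, f p.1 + p.2)) :=
        (Measure.map_map hshear.measurable (hW.prodMk hZ)).symm
    _ = (P.map W).prod μ := by rw [hjoint, hshear.map_eq]

theorem indepFun_add_of_indepFun (hW : Measurable W) (hZ : Measurable Z)
    (hf : Measurable f) (hZ_law : P.map Z = μ) (hWZ : IndepFun W Z P) :
    IndepFun (fun ω => f (W ω) + Z ω) W P ∧ P.map (fun ω => f (W ω) + Z ω) = μ := by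
  have hjoint := map_prod_add_eq_prod_of_indepFun hW hZ hf hZ_law hWZ
  have hsum : Measurable fun ω => f (W ω) + Z ω := (hf.comp hW).add hZ
  have : IsProbabilityMeasure (P.map W) := Measure.isProbabilityMeasure_map hW.aemeasurable
  have : IsProbabilityMeasure μ := hZ_law ▸ Measure.isProbabilityMeasure_map hZ.aemeasurable
  have hlaw : P.map (fun ω => f (W ω) + Z ω) = μ := by
    rw [← Measure.snd_map_prodMk hW, hjoint, Measure.snd_prod]
  refine ⟨IndepFun.symm ?_, hlaw⟩
  rw [indepFun_iff_map_prod_eq_prod_map_map hW.aemeasurable hsum.aemeasurable, hjoint, hlaw]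

end OneTimePad

/-- Strengthened one-time pad on the torus: if `Z` is uniformly (Haar) distributed on
the torus `AddCircle (1 : ℝ)` and independent of the pair `(X, Y)` (where `Y` is any
side information), then the ciphertext `X + Z` is independent of the pair `(X, Y)`,
and `X + Z` is uniformly (Haar) distributed. -/
theorem torus_otp_pair {Ω E : Type*} [MeasureSpace Ω]
    [IsProbabilityMeasure (ℙ : Measure Ω)] [MeasurableSpace E]
    (X : Ω → AddCircle (1 : ℝ)) (Y : Ω → E) (Z : Ω → AddCircle (1 : ℝ))
    (hX : Measurable X) (hY : Measurable Y) (hZ : Measurable Z)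
    (hZ_unif : (ℙ : Measure Ω).map Z = (volume : Measure (AddCircle (1 : ℝ))))
    (hZ_indep : IndepFun Z (fun ω => (X ω, Y ω)) ℙ) :
    IndepFun (X + Z) (fun ω => (X ω, Y ω)) ℙ ∧
      (ℙ : Measure Ω).map (X + Z) = (volume : Measure (AddCircle (1 : ℝ))) :=
  indepFun_add_of_indepFun (hX.prodMk hY) hZ measurable_fst hZ_unif hZ_indep.symm
end

section
/- Let K ≥ 2 and m be natural numbers, L a real number, and θ, θ' : Fin K → Fin m → ℝ two deterministic families of local models with equal aggregates: ∑_{k} θ_k i = ∑_{k} θ'_k i for every i ∈ Fin m. Let (Ω, ℙ) be a probability space and, for every pair (k, j) with k < j, let z_{k,j} : Ω → (Fin m → AddCircle (1 : ℝ)) be mutually independent masks, each with law the product of m copies of the Haar probability measure on AddCircle (1 : ℝ). Define p_k = (fun i => π(θ_k i / L)) + ∑_{j > k} z_{k,j} − ∑_{j < k} z_{j,k} and p'_k analogously from θ'. Then the joint law of the random tuple (p_1, …, p_K) equals the joint law of (p'_1, …, p'_K); i.e., the distribution of the encrypted updates seen by the server depends on the local models only through their aggregate. -/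
open MeasureTheory ProbabilityTheory Finset

lemma torus_secagg_joint_law_pi {ι : Type*} [Fintype ι] {Ω : Type*} [MeasureSpace Ω]
    [IsProbabilityMeasure (ℙ : Measure Ω)]
    {β : ι → Type*} [mβ : ∀ i, MeasurableSpace (β i)]
    {f : ∀ i, Ω → β i} (hf : ∀ i, Measurable (f i))
    (h : iIndepFun f ℙ) :
    (ℙ : Measure Ω).map (fun ω i => f i ω) =
      Measure.pi (fun i => (ℙ : Measure Ω).map (f i)) := by
  have hmeas : Measurable (fun ω i => f i ω) := measurable_pi_lambda _ hf
  have hprob : ∀ i, IsProbabilityMeasure ((ℙ : Measure Ω).map (f i)) :=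
    fun i => Measure.isProbabilityMeasure_map (hf i).aemeasurable
  refine (Measure.pi_eq fun s hs => ?_).symm
  rw [Measure.map_apply hmeas (MeasurableSet.univ_pi hs)]
  have hpre : (fun ω i => f i ω) ⁻¹' Set.pi Set.univ s = ⋂ i ∈ Finset.univ, f i ⁻¹' s i := by
    ext ω; simp [Set.mem_pi]
  rw [hpre, (iIndepFun_iff_measure_inter_preimage_eq_mul.mp h) Finset.univ
    (fun i _ => hs i)]
  exact Finset.prod_congr rfl fun i _ => (Measure.map_apply (hf i) (hs i)).symm

/-- The distribution of the encrypted updates seen by the server depends on the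
local models only through their aggregate: if two deterministic families of local
models `θ` and `θ'` have equal aggregates, then the joint laws of the corresponding
tuples of encrypted updates coincide. -/
theorem torus_secure_aggregation_law_depends_only_on_aggregate
    (K m : ℕ) (hK : 2 ≤ K) (L : ℝ)
    (θ θ' : Fin K → Fin m → ℝ)
    (hagg : ∀ i : Fin m, ∑ k : Fin K, θ k i = ∑ k : Fin K, θ' k i)
    {Ω : Type*} [MeasureSpace Ω] [IsProbabilityMeasure (ℙ : Measure Ω)]
    (z : Fin K → Fin K → Ω → (Fin m → AddCircle (1 : ℝ)))
    (hz : ∀ k j, Measurable (z k j))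
    (hz_unif : ∀ k j : Fin K, k < j → (ℙ : Measure Ω).map (z k j) =
      Measure.pi (fun _ : Fin m => (volume : Measure (AddCircle (1 : ℝ)))))
    (hindep : iIndepFun (m :=
      fun _ : {q : Fin K × Fin K // q.1 < q.2} =>
        (inferInstance : MeasurableSpace (Fin m → AddCircle (1 : ℝ))))
      (fun s : {q : Fin K × Fin K // q.1 < q.2} => z s.1.1 s.1.2) ℙ)
    (p p' : Fin K → Ω → (Fin m → AddCircle (1 : ℝ)))
    (hp : ∀ k ω, p k ω =
      (fun i => ((θ k i / L : ℝ) : AddCircle (1 : ℝ)))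
        + (∑ j ∈ univ.filter (fun j => k < j), z k j ω)
        - ∑ j ∈ univ.filter (fun j => j < k), z j k ω)
    (hp' : ∀ k ω, p' k ω =
      (fun i => ((θ' k i / L : ℝ) : AddCircle (1 : ℝ)))
        + (∑ j ∈ univ.filter (fun j => k < j), z k j ω)
        - ∑ j ∈ univ.filter (fun j => j < k), z j k ω) :
    (ℙ : Measure Ω).map (fun ω => fun k : Fin K => p k ω) =
      (ℙ : Measure Ω).map (fun ω => fun k : Fin K => p' k ω) := by
  classical
  -- joint law of the masks
  have hg : Measurable (fun ω (s : {q : Fin K × Fin K // q.1 < q.2}) => z s.1.1 s.1.2 ω) :=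
    measurable_pi_lambda _ fun s => hz _ _
  set μ : Measure ({q : Fin K × Fin K // q.1 < q.2} → (Fin m → AddCircle (1 : ℝ))) :=
    Measure.pi (fun _ => Measure.pi fun _ : Fin m => (volume : Measure (AddCircle (1 : ℝ))))
    with hμ
  have hglaw : (ℙ : Measure Ω).map
      (fun ω (s : {q : Fin K × Fin K // q.1 < q.2}) => z s.1.1 s.1.2 ω) = μ := by
    rw [torus_secagg_joint_law_pi (fun s : {q : Fin K × Fin K // q.1 < q.2} =>
      hz s.1.1 s.1.2) hindep]
    exact congrArg Measure.pi (funext fun s => hz_unif s.1.1 s.1.2 s.2)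
  -- the post-processing map
  set F : (Fin K → Fin m → AddCircle (1 : ℝ)) →
      ({q : Fin K × Fin K // q.1 < q.2} → (Fin m → AddCircle (1 : ℝ))) →
      (Fin K → Fin m → AddCircle (1 : ℝ)) := fun a v k =>
    a k + (∑ j ∈ univ.filter (fun j => k < j), if h : k < j then v ⟨(k, j), h⟩ else 0)
      - ∑ j ∈ univ.filter (fun j => j < k), if h : j < k then v ⟨(j, k), h⟩ else 0 with hF
  have hFmeas : ∀ a, Measurable (F a) := by
    intro a
    refine measurable_pi_lambda _ fun k => ?_
    apply Measurable.sub
    · apply Measurable.add measurable_const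
      refine Finset.measurable_sum _ fun j hj => ?_
      split_ifs with h
      · exact measurable_pi_apply _
      · exact measurable_const
    · refine Finset.measurable_sum _ fun j hj => ?_
      split_ifs with h
      · exact measurable_pi_apply _
      · exact measurable_const
  have hFg : ∀ (θ₀ : Fin K → Fin m → ℝ) (q : Fin K → Ω → (Fin m → AddCircle (1 : ℝ))),
      (∀ k ω, q k ω =
        (fun i => ((θ₀ k i / L : ℝ) : AddCircle (1 : ℝ)))
          + (∑ j ∈ univ.filter (fun j => k < j), z k j ω)
          - ∑ j ∈ univ.filter (fun j => j < k), z j k ω) →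
      (fun ω => fun k : Fin K => q k ω)
        = (F (fun k i => ((θ₀ k i / L : ℝ) : AddCircle (1 : ℝ)))) ∘
          (fun ω (s : {q : Fin K × Fin K // q.1 < q.2}) => z s.1.1 s.1.2 ω) := by
    intro θ₀ q hq
    funext ω
    funext k
    rw [hq k ω]
    simp only [Function.comp_apply, hF]
    congr 1
    · congr 1
      refine Finset.sum_congr rfl fun j hj => ?_
      rw [dif_pos (mem_filter.mp hj).2]
    · refine Finset.sum_congr rfl fun j hj => ?_
      rw [dif_pos (mem_filter.mp hj).2]
  have key : ∀ a : Fin K → Fin m → AddCircle (1 : ℝ),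
      (ℙ : Measure Ω).map ((F a) ∘
        (fun ω (s : {q : Fin K × Fin K // q.1 < q.2}) => z s.1.1 s.1.2 ω))
      = μ.map (F a) := fun a => by
    rw [← Measure.map_map (hFmeas a) hg, hglaw]
  rw [hFg θ p hp, hFg θ' p' hp', key, key]
  -- reduce to invariance of the product Haar measure under translation
  have hz0 : (0 : ℕ) < K := by omega
  set z0 : Fin K := ⟨0, hz0⟩ with hz0def
  set c : Fin K → Fin m → AddCircle (1 : ℝ) :=
    fun k i => ((θ k i / L : ℝ) : AddCircle (1 : ℝ)) with hc
  set c' : Fin K → Fin m → AddCircle (1 : ℝ) :=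
    fun k i => ((θ' k i / L : ℝ) : AddCircle (1 : ℝ)) with hc'
  set d : Fin K → Fin m → AddCircle (1 : ℝ) :=
    fun k i => (((θ' k i - θ k i) / L : ℝ) : AddCircle (1 : ℝ)) with hd
  have hdsum : ∑ k : Fin K, d k = 0 := by
    funext i
    have h1 : ∑ k : Fin K, d k i
        = ((∑ k : Fin K, (θ' k i - θ k i) / L : ℝ) : AddCircle (1 : ℝ)) := by
      rw [hd]
      exact (map_sum (QuotientAddGroup.mk' (AddSubgroup.zmultiples (1 : ℝ)))
        (fun k => (θ' k i - θ k i) / L) univ).symm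
    have h2 : (∑ k : Fin K, (θ' k i - θ k i) / L : ℝ) = 0 := by
      rw [← Finset.sum_div, Finset.sum_sub_distrib, hagg i, sub_self, zero_div]
    simp only [Finset.sum_apply]
    rw [h1, h2]
    rfl
  set t : {q : Fin K × Fin K // q.1 < q.2} → (Fin m → AddCircle (1 : ℝ)) :=
    fun s => if s.1.1 = z0 then -(d s.1.2) else 0 with ht
  have hFc' : F c' = (F c) ∘ (fun v => t + v) := by
    funext v k
    simp only [Function.comp_apply, hF]
    have hsum1 : (∑ j ∈ univ.filter (fun j => k < j),
        if h : k < j then (t + v) ⟨(k, j), h⟩ else 0)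
        = (∑ j ∈ univ.filter (fun j => k < j), if h : k < j then t ⟨(k, j), h⟩ else 0)
          + ∑ j ∈ univ.filter (fun j => k < j), if h : k < j then v ⟨(k, j), h⟩ else 0 := by
      rw [← Finset.sum_add_distrib]
      refine Finset.sum_congr rfl fun j hj => ?_
      have h := (mem_filter.mp hj).2
      rw [dif_pos h, dif_pos h, dif_pos h]
      rfl
    have hsum2 : (∑ j ∈ univ.filter (fun j => j < k),
        if h : j < k then (t + v) ⟨(j, k), h⟩ else 0)
        = (∑ j ∈ univ.filter (fun j => j < k), if h : j < k then t ⟨(j, k), h⟩ else 0)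
          + ∑ j ∈ univ.filter (fun j => j < k), if h : j < k then v ⟨(j, k), h⟩ else 0 := by
      rw [← Finset.sum_add_distrib]
      refine Finset.sum_congr rfl fun j hj => ?_
      have h := (mem_filter.mp hj).2
      rw [dif_pos h, dif_pos h, dif_pos h]
      rfl
    rw [hsum1, hsum2]
    have hΔ : (∑ j ∈ univ.filter (fun j => k < j), if h : k < j then t ⟨(k, j), h⟩ else 0)
        - (∑ j ∈ univ.filter (fun j => j < k), if h : j < k then t ⟨(j, k), h⟩ else 0)
        = d k := by
      by_cases hk : k = z0
      · subst hk
        have h2 : (∑ j ∈ univ.filter (fun j => j < z0),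
            if h : j < z0 then t ⟨(j, z0), h⟩ else 0) = 0 := by
          refine Finset.sum_eq_zero fun j hj => ?_
          exact absurd (mem_filter.mp hj).2 (by simp [hz0def, Fin.lt_def])
        have h1 : (∑ j ∈ univ.filter (fun j => z0 < j),
            if h : z0 < j then t ⟨(z0, j), h⟩ else 0)
            = ∑ j ∈ univ.filter (fun j => z0 < j), -(d j) := by
          refine Finset.sum_congr rfl fun j hj => ?_
          rw [dif_pos (mem_filter.mp hj).2, ht]
          simp
        rw [h1, h2, sub_zero, Finset.sum_neg_distrib]
        have hfilter : univ.filter (fun j => z0 < j) = univ.erase z0 := by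
          ext j
          simp [hz0def, Fin.lt_def, Fin.ext_iff, Nat.pos_iff_ne_zero]
        rw [hfilter]
        have h3 := Finset.add_sum_erase univ d (mem_univ z0)
        rw [hdsum] at h3
        rw [neg_eq_iff_add_eq_zero, add_comm]
        exact h3
      · have h1 : (∑ j ∈ univ.filter (fun j => k < j),
            if h : k < j then t ⟨(k, j), h⟩ else 0) = 0 := by
          refine Finset.sum_eq_zero fun j hj => ?_
          rw [dif_pos (mem_filter.mp hj).2, ht]
          simp [hk]
        have h2 : (∑ j ∈ univ.filter (fun j => j < k),
            if h : j < k then t ⟨(j, k), h⟩ else 0)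
            = ∑ j ∈ univ.filter (fun j => j < k), if j = z0 then -(d k) else 0 := by
          refine Finset.sum_congr rfl fun j hj => ?_
          rw [dif_pos (mem_filter.mp hj).2, ht]
        have hmem : z0 ∈ univ.filter (fun j => j < k) := by
          simp only [mem_filter, mem_univ, true_and, hz0def, Fin.lt_def]
          have : k.val ≠ 0 := fun h => hk (by rw [hz0def]; exact Fin.ext h)
          omega
        rw [h1, h2, Finset.sum_ite_eq' _ z0 (fun _ => -(d k)), if_pos hmem]
        simp
    have hck : c' k = c k + d k := by
      funext i
      rw [hc, hc', hd]
      simp only [Pi.add_apply]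
      rw [← AddCircle.coe_add]
      congr 1
      ring
    rw [hck, ← hΔ]
    abel
  haveI : μ.IsAddLeftInvariant := Measure.pi.isAddLeftInvariant _
  rw [hFc', ← Measure.map_map (hFmeas c) (measurable_const_add t),
    map_add_left_eq_self μ t]
end

section
/- Let K ≥ 1 be a natural number and R, L real numbers with L ≥ K * R and L > 0. Let θ : Fin K → ℝ satisfy 0 ≤ θ k < R for every k. Then (∑_{k} θ k) / L ∈ Set.Ico (0 : ℝ) 1, and ∑_{k} θ k is the unique real number y ∈ Set.Ico (0 : ℝ) L such that π(y / L) = ∑_{k} π(θ k / L), where π : ℝ → AddCircle (1 : ℝ) is the canonical quotient map. -/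
/-!
Write `S = ∑ k, θ k`. Since `π` is additive, the projected scaled parameters sum to
`π (S / L)`. Because `0 ≤ S < K * R ≤ L`, the real number `S / L` lies in the fundamental
domain `[0, 1)` of `ℝ/ℤ`, on which `π` is injective; hence no wrap-around occurs and `S` is
the only `y ∈ [0, L)` with `π (y / L) = π (S / L)`.
-/

open Finset

theorem AddCircle.coe_sum {𝕜 ι : Type*} [AddCommGroup 𝕜] {p : 𝕜} (s : Finset ι)
    (f : ι → 𝕜) : ((∑ i ∈ s, f i : 𝕜) : AddCircle p) = ∑ i ∈ s, (f i : AddCircle p) :=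
  map_sum (QuotientAddGroup.mk' (AddSubgroup.zmultiples p)) f s

theorem Finset.sum_lt_card_nsmul_of_lt {ι M : Type*} [Fintype ι] [Nonempty ι] [AddCommMonoid M]
    [PartialOrder M] [IsOrderedCancelAddMonoid M] {f : ι → M} {R : M} (hf : ∀ i, f i < R) :
    ∑ i, f i < Fintype.card ι • R := by
  simpa using Finset.sum_lt_sum_of_nonempty univ_nonempty fun i _ => hf i

theorem div_mem_Ico_zero_one {x L : ℝ} (hL : 0 < L) (hx : x ∈ Set.Ico 0 L) :
    x / L ∈ Set.Ico (0 : ℝ) 1 :=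
  ⟨div_nonneg hx.1 hL.le, (div_lt_one hL).mpr hx.2⟩

theorem AddCircle.coe_div_eq_coe_div_iff {x y L : ℝ} (hL : 0 < L) (hx : x ∈ Set.Ico 0 L)
    (hy : y ∈ Set.Ico 0 L) :
    ((x / L : ℝ) : AddCircle (1 : ℝ)) = ((y / L : ℝ) : AddCircle (1 : ℝ)) ↔ x = y := by
  rw [AddCircle.coe_eq_coe_iff_of_mem_Ico (a := 0) (by simpa using div_mem_Ico_zero_one hL hx)
    (by simpa using div_mem_Ico_zero_one hL hy), div_left_inj' hL.ne']

/-- Choice of the scaling factor `L ≥ K * R` avoids overflow: if each local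
parameter satisfies `0 ≤ θ k < R`, then the scaled aggregate `(∑ k, θ k) / L`
lies in `[0, 1)`, and `∑ k, θ k` is the unique real number `y ∈ [0, L)` whose
scaled projection to the torus equals the aggregate of the scaled projections
of the local parameters. -/
theorem scaling_factor_no_overflow
    (K : ℕ) (hK : 1 ≤ K) (R L : ℝ) (hL : (K : ℝ) * R ≤ L) (hL0 : 0 < L)
    (θ : Fin K → ℝ) (hθ0 : ∀ k, 0 ≤ θ k) (hθR : ∀ k, θ k < R) :
    (∑ k : Fin K, θ k) / L ∈ Set.Ico (0 : ℝ) 1 ∧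
      ∀ y : ℝ,
        (y ∈ Set.Ico (0 : ℝ) L ∧
            ((y / L : ℝ) : AddCircle (1 : ℝ)) =
              ∑ k : Fin K, ((θ k / L : ℝ) : AddCircle (1 : ℝ)))
          ↔ y = ∑ k : Fin K, θ k := by
  have : NeZero K := ⟨by omega⟩
  have hS : ∑ k, θ k ∈ Set.Ico 0 L := by
    refine ⟨sum_nonneg fun k _ => hθ0 k, lt_of_lt_of_le ?_ hL⟩
    simpa using Finset.sum_lt_card_nsmul_of_lt hθR
  have hproj : ∑ k, ((θ k / L : ℝ) : AddCircle (1 : ℝ)) = (((∑ k, θ k) / L : ℝ) : _) := by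
    rw [sum_div, AddCircle.coe_sum]
  refine ⟨div_mem_Ico_zero_one hL0 hS, fun y => ⟨fun ⟨hy, hyS⟩ => ?_, ?_⟩⟩
  · rwa [hproj, AddCircle.coe_div_eq_coe_div_iff hL0 hy hS] at hyS
  · rintro rfl
    exact ⟨hS, hproj.symm⟩
end
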